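/- arXiv:1806.01669 — 7 statements merged into one kernel-verified Lean document; each statement's English description precedes it below -/
import Mathlib

section
/- Suppose (a_k) is a nonnegative sequence, (λ_k) ⊂ (0,1], α ∈ (0,1), (η_k) nonnegative with ∑_{k=0}^∞ η_k ≤ η, and α λ_k a_k ≤ (1+η_k) a_k − a_{k+1} for all k. Then ∑_{k=0}^∞ λ_k a_k ≤ (1/α + (η/α)·e^η) · a_0, and in particular the series ∑ λ_k a_k converges. -/
theorem stmt_3 (a lam η : ℕ → ℝ) (α H : ℝ)
    (ha : ∀ k, 0 ≤ a k)
    (hlam : ∀ k, lam k ∈ Set.Ioc (0 : ℝ) 1)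
    (hα : α ∈ Set.Ioo (0 : ℝ) 1)
    (hη : ∀ k, 0 ≤ η k) (hsummable : Summable η) (hsum : ∑' k, η k ≤ H)
    (hbound : ∀ k, a (k + 1) ≤ Real.exp H * a 0)
    (hineq : ∀ k, α * lam k * a k ≤ (1 + η k) * a k - a (k + 1)) :
    Summable (fun k => lam k * a k) ∧
      ∑' k, lam k * a k ≤ (1 / α + (H / α) * Real.exp H) * a 0 := by
  obtain ⟨hα0, hα1⟩ := hα
  have hH0 : 0 ≤ H := le_trans (tsum_nonneg hη) hsum
  have hexp : 1 ≤ Real.exp H := Real.one_le_exp hH0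
  have hak : ∀ k, a k ≤ Real.exp H * a 0 := by
    intro k
    cases k with
    | zero => nlinarith [ha 0]
    | succ n => exact hbound n
  have key : ∀ n, ∑ k ∈ Finset.range n, lam k * a k ≤
      (a 0 + H * (Real.exp H * a 0)) / α := by
    intro n
    rw [le_div_iff₀ hα0]
    calc (∑ k ∈ Finset.range n, lam k * a k) * α
          = ∑ k ∈ Finset.range n, α * (lam k * a k) := by
            rw [Finset.sum_mul]; congr 1; ext k; ring
        _ ≤ ∑ k ∈ Finset.range n, ((a k - a (k + 1)) + η k * a k) := by
            apply Finset.sum_le_sum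
            intro k _
            have := hineq k
            nlinarith
        _ = (a 0 - a n) + ∑ k ∈ Finset.range n, η k * a k := by
            rw [Finset.sum_add_distrib, Finset.sum_range_sub' a]
        _ ≤ a 0 + ∑ k ∈ Finset.range n, η k * (Real.exp H * a 0) := by
            have h1 : a 0 - a n ≤ a 0 := by linarith [ha n]
            have h2 : ∑ k ∈ Finset.range n, η k * a k ≤
                ∑ k ∈ Finset.range n, η k * (Real.exp H * a 0) := by
              apply Finset.sum_le_sum
              intro k _
              exact mul_le_mul_of_nonneg_left (hak k) (hη k)
            linarith
        _ ≤ a 0 + H * (Real.exp H * a 0) := by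
            rw [← Finset.sum_mul]
            have h3 : ∑ k ∈ Finset.range n, η k ≤ H :=
              le_trans (Summable.sum_le_tsum (Finset.range n) (fun i _ => hη i) hsummable) hsum
            have h4 : 0 ≤ Real.exp H * a 0 :=
              mul_nonneg (Real.exp_nonneg H) (ha 0)
            nlinarith
  have hsummable' : Summable (fun k => lam k * a k) := by
    apply summable_of_sum_range_le (c := (a 0 + H * (Real.exp H * a 0)) / α) _ key
    intro k
    exact mul_nonneg (le_of_lt (hlam k).1) (ha k)
  refine ⟨hsummable', ?_⟩
  have := Summable.tsum_le_of_sum_range_le hsummable' key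
  calc ∑' k, lam k * a k ≤ (a 0 + H * (Real.exp H * a 0)) / α := this
    _ = (1 / α + (H / α) * Real.exp H) * a 0 := by field_simp
end

section
/- Suppose (a_k) is a nonnegative sequence, (λ_k) ⊂ (0,1], α ∈ (0,1), and (η_k) nonnegative summable with α λ_k a_k ≤ (1+η_k) a_k − a_{k+1} for all k. Then λ_k a_k → 0 as k → ∞. -/
theorem stmt_4 (a lam η : ℕ → ℝ) (α : ℝ)
    (ha : ∀ k, 0 ≤ a k)
    (hlam : ∀ k, lam k ∈ Set.Ioc (0 : ℝ) 1)
    (hα : α ∈ Set.Ioo (0 : ℝ) 1)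
    (hη : ∀ k, 0 ≤ η k) (hsummable : Summable η)
    (hineq : ∀ k, α * lam k * a k ≤ (1 + η k) * a k - a (k + 1)) :
    Filter.Tendsto (fun k => lam k * a k) Filter.atTop (nhds 0) := by
  obtain ⟨hα0, hα1⟩ := hα
  set S := ∑' k, η k with hS
  have hS0 : 0 ≤ S := tsum_nonneg hη
  have hmono : ∀ k, a (k+1) ≤ (1 + η k) * a k := by
    intro k
    have h1 := hineq k
    have h2 : 0 ≤ α * lam k * a k :=
      mul_nonneg (mul_nonneg hα0.le (hlam k).1.le) (ha k)
    linarith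
  set M := a 0 * Real.exp S with hM
  have hbound : ∀ k, a k ≤ M := by
    have key : ∀ k, a k ≤ a 0 * Real.exp (∑ j ∈ Finset.range k, η j) := by
      intro k
      induction k with
      | zero => simp
      | succ n ih =>
        calc a (n+1) ≤ (1 + η n) * a n := hmono n
        _ ≤ Real.exp (η n) * (a 0 * Real.exp (∑ j ∈ Finset.range n, η j)) := by
            apply mul_le_mul _ ih (ha n) (Real.exp_nonneg _)
            linarith [Real.add_one_le_exp (η n)]
        _ = a 0 * Real.exp (∑ j ∈ Finset.range (n+1), η j) := by
            rw [Finset.sum_range_succ, Real.exp_add]; ring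
    intro k
    calc a k ≤ a 0 * Real.exp (∑ j ∈ Finset.range k, η j) := key k
    _ ≤ M := by
        apply mul_le_mul_of_nonneg_left _ (ha 0)
        exact Real.exp_le_exp.2 (Summable.sum_le_tsum _ (fun i _ => hη i) hsummable)
  have hM0 : 0 ≤ M := le_trans (ha 0) (hbound 0)
  have hsum : Summable (fun k => lam k * a k) := by
    apply summable_of_sum_range_le
      (fun k => mul_nonneg (hlam k).1.le (ha k))
    intro n
    have h1 : α * ∑ k ∈ Finset.range n, lam k * a k
        ≤ a 0 - a n + ∑ k ∈ Finset.range n, η k * a k := by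
      rw [Finset.mul_sum]
      calc ∑ k ∈ Finset.range n, α * (lam k * a k)
          ≤ ∑ k ∈ Finset.range n, ((a k - a (k+1)) + η k * a k) := by
            apply Finset.sum_le_sum
            intro k _
            have := hineq k
            nlinarith [this]
        _ = a 0 - a n + ∑ k ∈ Finset.range n, η k * a k := by
            rw [Finset.sum_add_distrib, Finset.sum_range_sub']
    have h2 : ∑ k ∈ Finset.range n, η k * a k ≤ M * S := by
      calc ∑ k ∈ Finset.range n, η k * a k
          ≤ ∑ k ∈ Finset.range n, η k * M :=
            Finset.sum_le_sum fun k _ => mul_le_mul_of_nonneg_left (hbound k) (hη k)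
        _ = (∑ k ∈ Finset.range n, η k) * M := by rw [← Finset.sum_mul]
        _ ≤ S * M := mul_le_mul_of_nonneg_right
            (Summable.sum_le_tsum _ (fun i _ => hη i) hsummable) hM0
        _ = M * S := mul_comm _ _
    have h3 : α * ∑ k ∈ Finset.range n, lam k * a k ≤ a 0 + M * S := by
      have := ha n; linarith
    rw [show (∑ k ∈ Finset.range n, lam k * a k) ≤ (a 0 + M * S) / α ↔ _
      from le_div_iff₀ hα0]
    linarith
  exact hsum.tendsto_atTop_zero
end

section
/- Under the hypotheses of the previous statement, if the strong decrease condition a_{k+1} ≤ (1 − α(1+λ_k)) a_k holds for infinitely many k, then a_k → 0. -/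
theorem stmt_6 (a lam η : ℕ → ℝ) (α H : ℝ)
    (hα : α ∈ Set.Ioo (0 : ℝ) 1) (hH : 0 ≤ H)
    (ha : ∀ j, 0 ≤ a j)
    (hlam : ∀ j, lam j ∈ Set.Ioc (0 : ℝ) 1)
    (hη : ∀ j, 0 ≤ η j) (hsummable : Summable η) (hsum : ∑' j, η j ≤ H)
    (hdesc : ∀ j, a (j + 1) ≤ (1 + η j) * a j)
    (hinf : ∀ N : ℕ, ∃ k ≥ N, a (k + 1) ≤ (1 - α * (1 + lam k)) * a k) :
    Filter.Tendsto a Filter.atTop (nhds 0) := by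
  obtain ⟨hα0, hα1⟩ := hα
  set P : ℕ → ℝ := fun k => ∏ j ∈ Finset.range k, (1 + η j) with hP
  have hPpos : ∀ k, 0 < P k := by
    intro k
    apply Finset.prod_pos
    intro j _
    nlinarith [hη j]
  have hPmono : Monotone P := by
    apply monotone_nat_of_le_succ
    intro k
    have : P (k + 1) = P k * (1 + η k) := Finset.prod_range_succ _ k
    nlinarith [hPpos k, hη k]
  have hPle : ∀ k, P k ≤ Real.exp H := by
    intro k
    calc P k ≤ ∏ j ∈ Finset.range k, Real.exp (η j) := by
          apply Finset.prod_le_prod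
          · intro j _; nlinarith [hη j]
          · intro j _; linarith [Real.add_one_le_exp (η j)]
      _ = Real.exp (∑ j ∈ Finset.range k, η j) := (Real.exp_sum _ _).symm
      _ ≤ Real.exp H := by
          apply Real.exp_le_exp.2
          refine le_trans ?_ hsum
          exact Summable.sum_le_tsum _ (fun j _ => hη j) hsummable
  set b : ℕ → ℝ := fun k => a k / P k with hb
  have hbnn : ∀ k, 0 ≤ b k := fun k => div_nonneg (ha k) (hPpos k).le
  have hbanti : Antitone b := by
    apply antitone_nat_of_succ_le
    intro k
    rw [hb]
    simp only
    rw [div_le_div_iff₀ (hPpos (k+1)) (hPpos k)]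
    have hP1 : P (k + 1) = P k * (1 + η k) := Finset.prod_range_succ _ k
    calc a (k+1) * P k ≤ ((1 + η k) * a k) * P k := by
          nlinarith [hdesc k, hPpos k]
      _ = a k * P (k+1) := by rw [hP1]; ring
  have hbdd : BddBelow (Set.range b) := ⟨0, by rintro x ⟨k, rfl⟩; exact hbnn k⟩
  set L : ℝ := ⨅ n, b n with hL
  have hLtend : Filter.Tendsto b Filter.atTop (nhds L) :=
    tendsto_atTop_ciInf hbanti hbdd
  have hL0 : 0 ≤ L := le_ciInf hbnn
  -- strong decrease for b at infinitely many k
  have hbdec : ∀ N : ℕ, ∃ k ≥ N, b (k + 1) ≤ (1 - α) * b k := by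
    intro N
    obtain ⟨k, hk, hdec⟩ := hinf N
    refine ⟨k, hk, ?_⟩
    have h1 : a (k + 1) ≤ (1 - α) * a k := by
      have hl := (hlam k).1
      nlinarith [ha k, mul_nonneg (mul_nonneg hα0.le hl.le) (ha k)]
    have h2 : b (k + 1) ≤ a (k + 1) / P k := by
      apply div_le_div_of_nonneg_left (ha (k+1)) (hPpos k) (hPmono (Nat.le_succ k))
    calc b (k + 1) ≤ a (k + 1) / P k := h2
      _ ≤ ((1 - α) * a k) / P k := by
          rw [div_le_div_iff₀ (hPpos k) (hPpos k)]
          nlinarith [hPpos k]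
      _ = (1 - α) * b k := by rw [hb]; ring
  have hLle : L ≤ (1 - α) * L := by
    apply le_of_forall_pos_le_add
    intro ε hε
    obtain ⟨n, hn⟩ : ∃ n, b n < L + ε := by
      by_contra h
      push_neg at h
      have : L + ε ≤ L := le_ciInf h
      linarith
    obtain ⟨k, hk, hdec⟩ := hbdec n
    have h1 : L ≤ b (k + 1) := ciInf_le hbdd (k + 1)
    have h2 : b k ≤ b n := hbanti hk
    nlinarith
  have hLzero : L = 0 := by nlinarith
  rw [hLzero] at hLtend
  -- squeeze a between 0 and b * exp H
  have hupper : ∀ n, a n ≤ b n * Real.exp H := by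
    intro n
    have : a n = b n * P n := (div_mul_cancel₀ _ (hPpos n).ne').symm
    rw [this]
    exact mul_le_mul_of_nonneg_left (hPle n) (hbnn n)
  have htend : Filter.Tendsto (fun n => b n * Real.exp H) Filter.atTop (nhds 0) := by
    have := hLtend.mul_const (Real.exp H)
    simpa using this
  exact tendsto_of_tendsto_of_tendsto_of_le_of_le tendsto_const_nhds htend ha hupper
end

section
/- Let C ⊂ ℝⁿ be nonempty closed convex, y, ỹ ∈ ℝⁿ, μ ≥ 0. Let z ∈ C satisfy ⟨z − y, u − z⟩ ≥ −μ for all u ∈ C and let z̃ = P_C(ỹ) be the exact projection of ỹ onto C. Then ‖z − z̃‖ ≤ ‖y − ỹ‖ + √(2μ). -/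
open scoped RealInnerProductSpace

theorem stmt_9 (n : ℕ) (C : Set (EuclideanSpace ℝ (Fin n)))
    (hC : C.Nonempty) (hclosed : IsClosed C) (hconv : Convex ℝ C)
    (y ytil z ztil : EuclideanSpace ℝ (Fin n)) (μ : ℝ) (hμ : 0 ≤ μ)
    (hz : z ∈ C)
    (happrox : ∀ u ∈ C, ⟪z - y, u - z⟫ ≥ -μ)
    (hztil : ztil ∈ C)
    (hproj : ∀ u ∈ C, ⟪ztil - ytil, u - ztil⟫ ≥ 0) :
    ‖z - ztil‖ ≤ ‖y - ytil‖ + Real.sqrt (2 * μ) := by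
  have h1 := happrox ztil hztil
  have h2 := hproj z hz
  have e1 : ⟪z - y, ztil - z⟫ = -⟪z - y, z - ztil⟫ := by
    rw [← inner_neg_right]; congr 1; abel
  have e2 : (z - ztil) - (y - ytil) = (z - y) - (ztil - ytil) := by abel
  have h3 : ⟪(z - ztil) - (y - ytil), z - ztil⟫ ≤ μ := by
    rw [e2, inner_sub_left]; linarith
  rw [inner_sub_left, real_inner_self_eq_norm_sq] at h3
  have key : ‖z - ztil‖ ^ 2 ≤ ⟪y - ytil, z - ztil⟫ + μ := by linarith
  have cs := real_inner_le_norm (y - ytil) (z - ztil)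
  have hs : Real.sqrt (2 * μ) ^ 2 = 2 * μ := Real.sq_sqrt (by linarith)
  have hs0 : 0 ≤ Real.sqrt (2 * μ) := Real.sqrt_nonneg _
  have ha : 0 ≤ ‖z - ztil‖ := norm_nonneg _
  have hb : 0 ≤ ‖y - ytil‖ := norm_nonneg _
  by_contra h
  push_neg at h
  nlinarith [mul_pos (lt_of_le_of_lt (by linarith) h) (sub_pos.mpr (by linarith : ‖y - ytil‖ < ‖z - ztil‖))]
end

section
/- Let C ⊂ ℝⁿ be nonempty closed convex, x ∈ C, s ∈ ℝⁿ, y = x + s, θ ≥ 0 with 2θ ≤ β² for some β ≥ 0. Let z ∈ C satisfy ⟨z − y, u − z⟩ ≥ −θ‖s‖² for all u ∈ C, and set s̃ = z − x. Then ‖s̃‖ ≤ (1+β)‖s‖. -/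
open scoped RealInnerProductSpace

theorem stmt_11 (n : ℕ) (C : Set (EuclideanSpace ℝ (Fin n)))
    (hC : C.Nonempty) (hclosed : IsClosed C) (hconv : Convex ℝ C)
    (x s y z stil : EuclideanSpace ℝ (Fin n)) (θ β : ℝ)
    (hθ : 0 ≤ θ) (hβ : 0 ≤ β) (hθβ : 2 * θ ≤ β ^ 2)
    (hx : x ∈ C) (hy : y = x + s)
    (hz : z ∈ C)
    (happrox : ∀ u ∈ C, ⟪z - y, u - z⟫ ≥ -(θ * ‖s‖ ^ 2))
    (hstil : stil = z - x) :
    ‖stil‖ ≤ (1 + β) * ‖s‖ := by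
  have h1 := happrox x hx
  rw [hy] at h1
  have e1 : z - (x + s) = stil - s := by rw [hstil]; abel
  have e2 : x - z = -stil := by rw [hstil]; abel
  rw [e1, e2] at h1
  have h2 : ⟪stil - s, -stil⟫ = ⟪s, stil⟫ - ‖stil‖ ^ 2 := by
    rw [inner_neg_right, inner_sub_left, real_inner_self_eq_norm_sq]; ring
  rw [h2] at h1
  have h3 : ⟪s, stil⟫ ≤ ‖s‖ * ‖stil‖ := real_inner_le_norm s stil
  have ha : (0:ℝ) ≤ ‖stil‖ := norm_nonneg _
  have hb : (0:ℝ) ≤ ‖s‖ := norm_nonneg _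
  by_contra hcon
  push_neg at hcon
  have key : (0:ℝ) ≤ (‖stil‖ - (1 + β) * ‖s‖) * (‖stil‖ + β * ‖s‖) :=
    mul_nonneg (by linarith) (by positivity)
  nlinarith [mul_nonneg hβ (mul_nonneg hb hb), mul_nonneg (mul_nonneg hβ hβ) (mul_nonneg hb hb)]
end

section
/- Let F : ℝⁿ → ℝⁿ be C¹ with L-Lipschitz Jacobian on a convex set, x in the set, s̃ ∈ ℝⁿ with ‖F'(x)s̃ + F(x)‖ ≤ δ‖F(x)‖ and ‖s̃‖ ≤ K‖F(x)‖, where δ ∈ [0,1), K > 0, α ∈ (0,1). If λ ∈ (0,1] satisfies (L/2)K²λ‖F(x)‖ < α and λ(1−α−δ) ≥ 2α (assuming δ < 1−3α), then ‖F(x + λs̃)‖ ≤ (1 − α(1+λ))‖F(x)‖. -/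
/-!
Put `v = λ s̃`. The linear model `F x + F'(x) v = (1 - λ) F x + λ (F'(x) s̃ + F x)` is a convex
combination, so its norm is at most `(1 - λ + λ δ) ‖F x‖`; the Lipschitz bound on `F'` along the
segment makes the Taylor remainder at most `(L/2) ‖v‖² ≤ λ ((L/2) K² λ ‖F x‖) ‖F x‖ < λ α ‖F x‖`.
Finally `λ (1 - α - δ) ≥ 2 α` and `λ ≤ 1` give `1 - λ + λ δ + λ α ≤ 1 - α (1 + λ)`.
-/

open Set

section InexactNewton

variable {E G : Type*} [NormedAddCommGroup E] [NormedSpace ℝ E]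
  [NormedAddCommGroup G] [NormedSpace ℝ G]

theorem norm_image_add_sub_sub_fderiv_le {F : E → G} (hF : Differentiable ℝ F) {L : ℝ}
    {x v : E}
    (hLip : ∀ t ∈ Icc (0 : ℝ) 1, ‖fderiv ℝ F (x + t • v) - fderiv ℝ F x‖ ≤ L * (t * ‖v‖)) :
    ‖F (x + v) - F x - fderiv ℝ F x v‖ ≤ L / 2 * ‖v‖ ^ 2 := by
  set g : ℝ → G := fun t => F (x + t • v) - F x - t • fderiv ℝ F x v with hg
  have hg' : ∀ t : ℝ, HasDerivAt g (fderiv ℝ F (x + t • v) v - fderiv ℝ F x v) t := by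
    intro t
    have hline : HasDerivAt (fun t : ℝ => x + t • v) v t := by
      simpa using ((hasDerivAt_id t).smul_const v).const_add x
    have hcomp := (hF (x + t • v)).hasFDerivAt.comp_hasDerivAt t hline
    have h := (hcomp.sub_const (F x)).sub ((hasDerivAt_id t).smul_const (fderiv ℝ F x v))
    rwa [one_smul] at h
  have hB : ∀ t : ℝ, HasDerivAt (fun t : ℝ => L * ‖v‖ ^ 2 * t ^ 2 / 2) (L * ‖v‖ ^ 2 * t) t := by
    intro t
    refine (((hasDerivAt_pow 2 t).const_mul (L * ‖v‖ ^ 2)).div_const 2).congr_deriv ?_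
    simp only [Nat.cast_ofNat, Nat.add_one_sub_one, pow_one]
    ring
  have hbound : ∀ t ∈ Ico (0 : ℝ) 1,
      ‖fderiv ℝ F (x + t • v) v - fderiv ℝ F x v‖ ≤ L * ‖v‖ ^ 2 * t := by
    intro t ht
    calc ‖fderiv ℝ F (x + t • v) v - fderiv ℝ F x v‖
        = ‖(fderiv ℝ F (x + t • v) - fderiv ℝ F x) v‖ := rfl
      _ ≤ L * (t * ‖v‖) * ‖v‖ :=
          (ContinuousLinearMap.le_opNorm _ v).trans
            (mul_le_mul_of_nonneg_right (hLip t (Ico_subset_Icc_self ht)) (norm_nonneg v))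
      _ = L * ‖v‖ ^ 2 * t := by ring
  have key := image_norm_le_of_norm_deriv_right_le_deriv_boundary
    (B := fun t => L * ‖v‖ ^ 2 * t ^ 2 / 2) (fun t _ => (hg' t).continuousAt.continuousWithinAt)
    (fun t _ => (hg' t).hasDerivWithinAt)
    (by simp [hg]) hB hbound (right_mem_Icc.2 zero_le_one)
  simpa [hg] using key.trans_eq (by ring)

theorem norm_add_apply_smul_le (A : E →L[ℝ] G) (y : G) (s : E) {lam : ℝ}
    (hlam0 : 0 ≤ lam) (hlam1 : lam ≤ 1) :
    ‖y + A (lam • s)‖ ≤ (1 - lam) * ‖y‖ + lam * ‖A s + y‖ := by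
  have hconvex : y + A (lam • s) = (1 - lam) • y + lam • (A s + y) := by
    rw [map_smul]
    module
  rw [hconvex]
  refine (norm_add_le _ _).trans_eq ?_
  rw [norm_smul, norm_smul, Real.norm_of_nonneg (sub_nonneg.2 hlam1), Real.norm_of_nonneg hlam0]

theorem norm_apply_add_smul_le_of_inexact_step {F : E → E} (hF : Differentiable ℝ F)
    {S : Set E} {L : ℝ} (hL : 0 ≤ L)
    (hLip : ∀ u ∈ S, ∀ v ∈ S, ‖fderiv ℝ F u - fderiv ℝ F v‖ ≤ L * ‖u - v‖)
    {x s : E} {δ K lam : ℝ}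
    (hres : ‖fderiv ℝ F x s + F x‖ ≤ δ * ‖F x‖) (hs : ‖s‖ ≤ K * ‖F x‖)
    (hlam0 : 0 ≤ lam) (hlam1 : lam ≤ 1)
    (hseg : ∀ t ∈ Icc (0 : ℝ) 1, x + (t * lam) • s ∈ S) :
    ‖F (x + lam • s)‖ ≤ (1 - lam + lam * δ + L / 2 * K ^ 2 * lam ^ 2 * ‖F x‖) * ‖F x‖ := by
  set v := lam • s
  have hxS : x ∈ S := by simpa using hseg 0 (left_mem_Icc.2 zero_le_one)
  have hLipSeg : ∀ t ∈ Icc (0 : ℝ) 1,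
      ‖fderiv ℝ F (x + t • v) - fderiv ℝ F x‖ ≤ L * (t * ‖v‖) := by
    intro t ht
    have hmem : x + t • v ∈ S := by simpa [v, mul_smul] using hseg t ht
    simpa [norm_smul, abs_of_nonneg ht.1] using hLip _ hmem _ hxS
  have hremainder := norm_image_add_sub_sub_fderiv_le hF hLipSeg
  have hmodel : ‖F x + fderiv ℝ F x v‖ ≤ (1 - lam + lam * δ) * ‖F x‖ := by
    calc ‖F x + fderiv ℝ F x v‖
        ≤ (1 - lam) * ‖F x‖ + lam * ‖fderiv ℝ F x s + F x‖ :=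
          norm_add_apply_smul_le _ _ s hlam0 hlam1
      _ ≤ (1 - lam) * ‖F x‖ + lam * (δ * ‖F x‖) := by gcongr
      _ = (1 - lam + lam * δ) * ‖F x‖ := by ring
  have hv : ‖v‖ ≤ lam * (K * ‖F x‖) := by
    rw [norm_smul, Real.norm_of_nonneg hlam0]
    exact mul_le_mul_of_nonneg_left hs hlam0
  have hv_sq : L / 2 * ‖v‖ ^ 2 ≤ L / 2 * (lam * (K * ‖F x‖)) ^ 2 := by gcongr
  calc ‖F (x + v)‖
      = ‖(F x + fderiv ℝ F x v) + (F (x + v) - F x - fderiv ℝ F x v)‖ := by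
        congr 1; abel
    _ ≤ ‖F x + fderiv ℝ F x v‖ + ‖F (x + v) - F x - fderiv ℝ F x v‖ := norm_add_le _ _
    _ ≤ (1 - lam + lam * δ) * ‖F x‖ + L / 2 * (lam * (K * ‖F x‖)) ^ 2 := by
        linarith
    _ = (1 - lam + lam * δ + L / 2 * K ^ 2 * lam ^ 2 * ‖F x‖) * ‖F x‖ := by ring

end InexactNewton

theorem stmt_13_general (n : ℕ) (F : EuclideanSpace ℝ (Fin n) → EuclideanSpace ℝ (Fin n))
    (hF : ContDiff ℝ 1 F)
    (S : Set (EuclideanSpace ℝ (Fin n)))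
    (L : ℝ) (hL : 0 ≤ L)
    (hLip : ∀ u ∈ S, ∀ v ∈ S, ‖fderiv ℝ F u - fderiv ℝ F v‖ ≤ L * ‖u - v‖)
    (x stil : EuclideanSpace ℝ (Fin n)) (δ K α lam : ℝ)
    (hα : α ∈ Set.Ioo (0 : ℝ) 1)
    (hres : ‖fderiv ℝ F x stil + F x‖ ≤ δ * ‖F x‖)
    (hstil : ‖stil‖ ≤ K * ‖F x‖)
    (hlam : lam ∈ Set.Ioc (0 : ℝ) 1)
    (hseg : ∀ t ∈ Set.Icc (0 : ℝ) 1, x + (t * lam) • stil ∈ S)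
    (hsmall : L / 2 * K ^ 2 * lam * ‖F x‖ < α)
    (hlarge : lam * (1 - α - δ) ≥ 2 * α) :
    ‖F (x + lam • stil)‖ ≤ (1 - α * (1 + lam)) * ‖F x‖ := by
  obtain ⟨hlam0, hlam1⟩ := hlam
  have hstep := norm_apply_add_smul_le_of_inexact_step (hF.differentiable one_ne_zero) hL hLip
    hres hstil hlam0.le hlam1 hseg
  have hquad : L / 2 * K ^ 2 * lam ^ 2 * ‖F x‖ ≤ lam * α :=
    calc L / 2 * K ^ 2 * lam ^ 2 * ‖F x‖ = lam * (L / 2 * K ^ 2 * lam * ‖F x‖) := by ring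
      _ ≤ lam * α := by gcongr
  calc ‖F (x + lam • stil)‖
      ≤ (1 - lam + lam * δ + L / 2 * K ^ 2 * lam ^ 2 * ‖F x‖) * ‖F x‖ := hstep
    _ ≤ (1 - lam + lam * δ + lam * α) * ‖F x‖ := by gcongr
    _ ≤ (1 - α * (1 + lam)) * ‖F x‖ := by
        gcongr
        nlinarith [hα.1]

theorem stmt_13 (n : ℕ) (F : EuclideanSpace ℝ (Fin n) → EuclideanSpace ℝ (Fin n))
    (hF : ContDiff ℝ 1 F)
    (S : Set (EuclideanSpace ℝ (Fin n))) (hSconv : Convex ℝ S)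
    (L : ℝ) (hL : 0 ≤ L)
    (hLip : ∀ u ∈ S, ∀ v ∈ S, ‖fderiv ℝ F u - fderiv ℝ F v‖ ≤ L * ‖u - v‖)
    (x stil : EuclideanSpace ℝ (Fin n)) (δ K α lam : ℝ)
    (hδ : δ ∈ Set.Ico (0 : ℝ) 1) (hK : 0 < K) (hα : α ∈ Set.Ioo (0 : ℝ) 1)
    (hδα : δ < 1 - 3 * α)
    (hres : ‖fderiv ℝ F x stil + F x‖ ≤ δ * ‖F x‖)
    (hstil : ‖stil‖ ≤ K * ‖F x‖)
    (hlam : lam ∈ Set.Ioc (0 : ℝ) 1)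
    (hseg : ∀ t ∈ Set.Icc (0 : ℝ) 1, x + (t * lam) • stil ∈ S)
    (hsmall : L / 2 * K ^ 2 * lam * ‖F x‖ < α)
    (hlarge : lam * (1 - α - δ) ≥ 2 * α) :
    ‖F (x + lam • stil)‖ ≤ (1 - α * (1 + lam)) * ‖F x‖ :=
  stmt_13_general n F hF S L hL hLip x stil δ K α lam hα hres hstil hlam hseg hsmall hlarge
end

section
/- Suppose (a_k) is a nonnegative sequence, (λ_k) ⊂ (0,1], α ∈ (0,1), (η_k) nonnegative summable, with α λ_k a_k ≤ (1+η_k) a_k − a_{k+1} for all k. If additionally a_k ≤ a_{k+1} for all k ≥ K (for some K) and a_K > 0, then λ_k → 0. -/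
theorem stmt_18 (a lam η : ℕ → ℝ) (α : ℝ) (K : ℕ)
    (ha : ∀ k, 0 ≤ a k)
    (hlam : ∀ k, lam k ∈ Set.Ioc (0 : ℝ) 1)
    (hα : α ∈ Set.Ioo (0 : ℝ) 1)
    (hη : ∀ k, 0 ≤ η k) (hsummable : Summable η)
    (hineq : ∀ k, α * lam k * a k ≤ (1 + η k) * a k - a (k + 1))
    (hmono : ∀ k, K ≤ k → a k ≤ a (k + 1))
    (haK : 0 < a K) :
    Filter.Tendsto lam Filter.atTop (nhds 0) := by
  have hαpos := hα.1
  -- a_k ≥ a_K for k ≥ K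
  have hak : ∀ k, K ≤ k → a K ≤ a k := by
    intro k hk
    induction k with
    | zero => simp_all [Nat.le_zero.mp hk]
    | succ n ih =>
      rcases Nat.lt_or_ge K (n+1) with h | h
      · have hn : K ≤ n := Nat.lt_succ_iff.mp h
        exact le_trans (ih hn) (hmono n hn)
      · have : K = n + 1 := le_antisymm hk h
        simp [this]
  -- for k ≥ K, α * lam k ≤ η k
  have key : ∀ k, K ≤ k → lam k ≤ η k / α := by
    intro k hk
    have hapos : 0 < a k := lt_of_lt_of_le haK (hak k hk)
    have h1 : α * lam k * a k ≤ η k * a k := by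
      have := hineq k
      have h2 := hmono k hk
      nlinarith
    have h3 : α * lam k ≤ η k := le_of_mul_le_mul_right h1 hapos
    rw [le_div_iff₀ hαpos]
    linarith
  have hη0 : Filter.Tendsto η Filter.atTop (nhds 0) := hsummable.tendsto_atTop_zero
  have hdiv : Filter.Tendsto (fun k => η k / α) Filter.atTop (nhds 0) := by
    simpa using hη0.div_const α
  refine squeeze_zero' ?_ ?_ hdiv
  · exact Filter.Eventually.of_forall fun k => (hlam k).1.le
  · exact Filter.eventually_atTop.2 ⟨K, key⟩
end
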